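/- (Optimality on a critical region.) Fix θ ∈ ℝⁿ and an index set A ⊆ {1,…,n_c} such that G_A has full row rank. If the primal feasibility condition G z_A(θ) ≤ b + Sθ and the dual feasibility condition λ_A(θ) ≥ 0 both hold, then z_A(θ) together with the multiplier λ̃_A(θ) satisfies the KKT conditions H z + Gᵀλ = 0, Gz ≤ b + Sθ, λ ≥ 0, λ_k (G_k z − b_k − S_k θ) = 0 for all k, and z_A(θ) is the unique global minimizer of ½ zᵀHz over {z ∈ ℝ^m : Gz ≤ b + Sθ}. -/

import Mathlib

/-!
On the critical region, `z_A(θ)` together with `λ̃_A(θ)` is a KKT pair: stationarity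
`H z_A = -G_Aᵀ λ_A` is the definition of `z_A`, and the constraints in `A` are active since
`G_A z_A = W W⁻¹ (b_A + S_A θ)`, where `W = G_A H⁻¹ G_Aᵀ` is positive definite by the full row
rank of `G_A`. For a convex quadratic, KKT is sufficient: writing a feasible `z` as `z_A + d`,
`zᵀHz = z_Aᵀ H z_A + 2 dᵀH z_A + dᵀHd`, where `dᵀH z_A = Σ λ_k (b_k + S_k θ - G_k z) ≥ 0` by
stationarity and complementary slackness, and `dᵀHd > 0` unless `d = 0`.
-/

open Matrix

noncomputable section
namespace MpQP

/-- Submatrix of the rows of `G` indexed by the finite index set `A`. -/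
def subRows {nc p : ℕ} (G : Matrix (Fin nc) (Fin p) ℝ) (A : Finset (Fin nc)) :
    Matrix A (Fin p) ℝ := Matrix.of fun i k => G i.val k

/-- Subvector of `b` indexed by `A`. -/
def subVec {nc : ℕ} (b : Fin nc → ℝ) (A : Finset (Fin nc)) : A → ℝ := fun i => b i.val

/-- `G_A` has full row rank, i.e. the rows of `G` indexed by `A` are linearly independent. -/
def FullRowRank {nc m : ℕ} (G : Matrix (Fin nc) (Fin m) ℝ) (A : Finset (Fin nc)) : Prop :=
  LinearIndependent ℝ (fun i : A => G i.val)

/-- The parametric dual solution `λ_A(θ) = −(G_A H⁻¹ G_Aᵀ)⁻¹ (b_A + S_A θ)`. -/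
def lamOf {m n nc : ℕ} (H : Matrix (Fin m) (Fin m) ℝ) (G : Matrix (Fin nc) (Fin m) ℝ)
    (b : Fin nc → ℝ) (S : Matrix (Fin nc) (Fin n) ℝ) (A : Finset (Fin nc))
    (θ : Fin n → ℝ) : A → ℝ :=
  -((subRows G A * H⁻¹ * (subRows G A)ᵀ)⁻¹.mulVec
      (fun i => b i.val + S.mulVec θ i.val))

/-- The parametric primal solution `z_A(θ) = −H⁻¹ G_Aᵀ λ_A(θ)`. -/
def zOf {m n nc : ℕ} (H : Matrix (Fin m) (Fin m) ℝ) (G : Matrix (Fin nc) (Fin m) ℝ)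
    (b : Fin nc → ℝ) (S : Matrix (Fin nc) (Fin n) ℝ) (A : Finset (Fin nc))
    (θ : Fin n → ℝ) : Fin m → ℝ :=
  -((H⁻¹ * (subRows G A)ᵀ).mulVec (lamOf H G b S A θ))

/-- `λ̃_A(θ) ∈ ℝ^{n_c}`: the dual solution extended by zeros outside `A`. -/
def lamExt {m n nc : ℕ} (H : Matrix (Fin m) (Fin m) ℝ) (G : Matrix (Fin nc) (Fin m) ℝ)
    (b : Fin nc → ℝ) (S : Matrix (Fin nc) (Fin n) ℝ) (A : Finset (Fin nc))
    (θ : Fin n → ℝ) : Fin nc → ℝ :=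
  fun k => if h : k ∈ A then lamOf H G b S A θ ⟨k, h⟩ else 0

/-- `W = G_A H⁻¹ G_Aᵀ`. -/
def Wmat {m nc : ℕ} (H : Matrix (Fin m) (Fin m) ℝ) (G : Matrix (Fin nc) (Fin m) ℝ)
    (A : Finset (Fin nc)) : Matrix A A ℝ :=
  subRows G A * H⁻¹ * (subRows G A)ᵀ

/-- `w = G_A H⁻¹ G_jᵀ`. -/
def wvec {m nc : ℕ} (H : Matrix (Fin m) (Fin m) ℝ) (G : Matrix (Fin nc) (Fin m) ℝ)
    (A : Finset (Fin nc)) (j : Fin nc) : A → ℝ :=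
  (subRows G A * H⁻¹).mulVec (G j)

/-- `w₀ = G_j H⁻¹ G_jᵀ`. -/
def w0 {m nc : ℕ} (H : Matrix (Fin m) (Fin m) ℝ) (G : Matrix (Fin nc) (Fin m) ℝ)
    (j : Fin nc) : ℝ :=
  G j ⬝ᵥ H⁻¹.mulVec (G j)

/-- The Schur complement `C = w₀ − wᵀ W⁻¹ w`. -/
def Cval {m nc : ℕ} (H : Matrix (Fin m) (Fin m) ℝ) (G : Matrix (Fin nc) (Fin m) ℝ)
    (A : Finset (Fin nc)) (j : Fin nc) : ℝ :=
  w0 H G j - wvec H G A j ⬝ᵥ (Wmat H G A)⁻¹.mulVec (wvec H G A j)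

/-- `c_j = C⁻¹ (wᵀ W⁻¹ b_A − b_j)`. -/
def cVal {m nc : ℕ} (H : Matrix (Fin m) (Fin m) ℝ) (G : Matrix (Fin nc) (Fin m) ℝ)
    (b : Fin nc → ℝ) (A : Finset (Fin nc)) (j : Fin nc) : ℝ :=
  (Cval H G A j)⁻¹ * (wvec H G A j ⬝ᵥ (Wmat H G A)⁻¹.mulVec (subVec b A) - b j)

/-- `v_j = C⁻¹ (S_Aᵀ W⁻¹ w − S_jᵀ)`. -/
def vVec {m n nc : ℕ} (H : Matrix (Fin m) (Fin m) ℝ) (G : Matrix (Fin nc) (Fin m) ℝ)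
    (S : Matrix (Fin nc) (Fin n) ℝ) (A : Finset (Fin nc)) (j : Fin nc) : Fin n → ℝ :=
  (Cval H G A j)⁻¹ •
    ((subRows S A)ᵀ.mulVec ((Wmat H G A)⁻¹.mulVec (wvec H G A j)) - S j)

/-- `d̃_j ∈ ℝ^{n_c}`: equal to `W⁻¹ w` on `A`, to `−1` at index `j`, and `0` elsewhere. -/
def dExt {m nc : ℕ} (H : Matrix (Fin m) (Fin m) ℝ) (G : Matrix (Fin nc) (Fin m) ℝ)
    (A : Finset (Fin nc)) (j : Fin nc) : Fin nc → ℝ :=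
  fun k =>
    if h : k ∈ A then (Wmat H G A)⁻¹.mulVec (wvec H G A j) ⟨k, h⟩
    else if k = j then -1 else 0

/-- `f_j = H⁻¹ G_{A ∪ {j}}ᵀ (d̃_j restricted to A ∪ {j})`. -/
def fVec {m nc : ℕ} (H : Matrix (Fin m) (Fin m) ℝ) (G : Matrix (Fin nc) (Fin m) ℝ)
    (A : Finset (Fin nc)) (j : Fin nc) : Fin m → ℝ :=
  (H⁻¹ * (subRows G (insert j A))ᵀ).mulVec (fun i => dExt H G A j i.val)

section KKT

variable {ι κ : Type*} [Fintype ι] [Fintype κ]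

lemma dotProduct_mulVec_add_of_isHermitian {H : Matrix ι ι ℝ} (hH : H.IsHermitian)
    (z d : ι → ℝ) :
    (z + d) ⬝ᵥ H *ᵥ (z + d) = z ⬝ᵥ H *ᵥ z + 2 * (d ⬝ᵥ H *ᵥ z) + d ⬝ᵥ H *ᵥ d := by
  have hsymm : z ⬝ᵥ H *ᵥ d = d ⬝ᵥ H *ᵥ z := by
    rw [dotProduct_mulVec, ← vecMul_transpose, ← conjTranspose_eq_transpose_of_trivial, hH,
      dotProduct_comm]
  rw [mulVec_add, dotProduct_add, add_dotProduct, add_dotProduct, hsymm]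
  ring

/-- The KKT conditions of `minimize ½ zᵀHz subject to Gz ≤ c` at the primal-dual pair `(z, μ)`. -/
structure IsKKTPoint (H : Matrix ι ι ℝ) (G : Matrix κ ι ℝ) (c : κ → ℝ) (z : ι → ℝ)
    (μ : κ → ℝ) : Prop where
  stationary : H *ᵥ z + Gᵀ *ᵥ μ = 0
  primal_feasible : G *ᵥ z ≤ c
  dual_feasible : 0 ≤ μ
  complementary_slackness : ∀ k, μ k * ((G *ᵥ z) k - c k) = 0

namespace IsKKTPoint

variable {H : Matrix ι ι ℝ} {G : Matrix κ ι ℝ} {c : κ → ℝ} {z z' : ι → ℝ} {μ : κ → ℝ}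

lemma dotProduct_sub_mulVec_nonneg (h : IsKKTPoint H G c z μ) (hz' : G *ᵥ z' ≤ c) :
    0 ≤ (z' - z) ⬝ᵥ H *ᵥ z := by
  have hHz : H *ᵥ z = -(Gᵀ *ᵥ μ) := eq_neg_of_add_eq_zero_left h.stationary
  have hterm : ∀ k, 0 ≤ μ k * (c k - (G *ᵥ z') k) := fun k =>
    mul_nonneg (h.dual_feasible k) (sub_nonneg.mpr (hz' k))
  calc 0 ≤ ∑ k, μ k * (c k - (G *ᵥ z') k) := Finset.sum_nonneg fun k _ => hterm k
    _ = ∑ k, μ k * ((G *ᵥ z) k - (G *ᵥ z') k) :=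
        Finset.sum_congr rfl fun k _ => by linear_combination -h.complementary_slackness k
    _ = (z' - z) ⬝ᵥ H *ᵥ z := by
        rw [hHz, dotProduct_neg, dotProduct_mulVec, vecMul_transpose, mulVec_sub]
        simp only [dotProduct, Pi.sub_apply, ← Finset.sum_neg_distrib]
        exact Finset.sum_congr rfl fun k _ => by ring

lemma dotProduct_mulVec_le (h : IsKKTPoint H G c z μ) (hH : H.PosSemidef)
    (hz' : G *ᵥ z' ≤ c) : z ⬝ᵥ H *ᵥ z ≤ z' ⬝ᵥ H *ᵥ z' := by
  have hexpand := dotProduct_mulVec_add_of_isHermitian hH.isHermitian z (z' - z)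
  rw [add_sub_cancel] at hexpand
  have hquad : 0 ≤ (z' - z) ⬝ᵥ H *ᵥ (z' - z) := by
    simpa only [star_trivial] using hH.dotProduct_mulVec_nonneg (z' - z)
  linarith [h.dotProduct_sub_mulVec_nonneg hz']

lemma eq_of_dotProduct_mulVec_eq (h : IsKKTPoint H G c z μ) (hH : H.PosDef)
    (hz' : G *ᵥ z' ≤ c) (heq : z' ⬝ᵥ H *ᵥ z' = z ⬝ᵥ H *ᵥ z) : z' = z := by
  have hexpand := dotProduct_mulVec_add_of_isHermitian hH.isHermitian z (z' - z)
  rw [add_sub_cancel] at hexpand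
  by_contra hne
  have hpos := hH.dotProduct_mulVec_pos (sub_ne_zero.mpr hne)
  rw [star_trivial] at hpos
  linarith [h.dotProduct_sub_mulVec_nonneg hz']

end IsKKTPoint

end KKT

section ActiveSet

variable {m n nc : ℕ} {H : Matrix (Fin m) (Fin m) ℝ} {G : Matrix (Fin nc) (Fin m) ℝ}
  {b : Fin nc → ℝ} {S : Matrix (Fin nc) (Fin n) ℝ} {A : Finset (Fin nc)} {θ : Fin n → ℝ}

lemma posDef_Wmat (hH : H.PosDef) (hA : FullRowRank G A) : (Wmat H G A).PosDef := by
  have hinj : Function.Injective fun v => v ᵥ* subRows G A := vecMul_injective_iff.mpr hA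
  simpa only [Wmat, conjTranspose_eq_transpose_of_trivial] using hH.inv.mul_mul_conjTranspose_same hinj

lemma transpose_mulVec_lamExt :
    Gᵀ *ᵥ lamExt H G b S A θ = (subRows G A)ᵀ *ᵥ lamOf H G b S A θ := by
  funext j
  simp only [mulVec, dotProduct, transpose_apply, subRows, of_apply, lamExt]
  rw [← Finset.sum_subset (Finset.subset_univ A) fun k _ hk => by simp [hk],
    ← Finset.sum_coe_sort A]
  exact Finset.sum_congr rfl fun i _ => by simp [i.2]

lemma mulVec_zOf (hH : IsUnit H.det) :
    H *ᵥ zOf H G b S A θ = -((subRows G A)ᵀ *ᵥ lamOf H G b S A θ) := by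
  rw [zOf, mulVec_neg, mulVec_mulVec, ← Matrix.mul_assoc, mul_nonsing_inv H hH, Matrix.one_mul]

lemma subRows_mulVec_zOf (hW : IsUnit (Wmat H G A).det) :
    subRows G A *ᵥ zOf H G b S A θ = fun i : A => b i + (S *ᵥ θ) i := by
  rw [Wmat] at hW
  unfold zOf lamOf
  simp only [mulVec_neg, neg_neg, mulVec_mulVec]
  rw [← Matrix.mul_assoc, ← Matrix.mul_assoc, mul_nonsing_inv _ hW, one_mulVec]

lemma isKKTPoint_zOf_lamExt (hH : H.PosDef) (hA : FullRowRank G A)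
    (hprimal : G *ᵥ zOf H G b S A θ ≤ b + S *ᵥ θ) (hdual : ∀ i : A, 0 ≤ lamOf H G b S A θ i) :
    IsKKTPoint H G (b + S *ᵥ θ) (zOf H G b S A θ) (lamExt H G b S A θ) where
  stationary := by
    rw [mulVec_zOf ((isUnit_iff_isUnit_det _).mp hH.isUnit), transpose_mulVec_lamExt,
      neg_add_cancel]
  primal_feasible := hprimal
  dual_feasible k := by
    unfold lamExt
    split_ifs with hk
    exacts [hdual ⟨k, hk⟩, le_rfl]
  complementary_slackness k := by
    unfold lamExt
    split_ifs with hk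
    · have hactive : (G *ᵥ zOf H G b S A θ) k = b k + (S *ᵥ θ) k :=
        congrFun (subRows_mulVec_zOf (b := b) (S := S) (θ := θ)
          ((isUnit_iff_isUnit_det _).mp (posDef_Wmat hH hA).isUnit)) ⟨k, hk⟩
      rw [hactive, Pi.add_apply, sub_self, mul_zero]
    · exact zero_mul _

end ActiveSet

/-- Optimality on a critical region: if `G_A` has full row rank and both the
primal feasibility `G z_A(θ) ≤ b + Sθ` and the dual feasibility `λ_A(θ) ≥ 0`
hold, then `(z_A(θ), λ̃_A(θ))` satisfies the KKT conditions of `QP(θ)` and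
`z_A(θ)` is the unique global minimizer of `½ zᵀHz` over `{z : Gz ≤ b + Sθ}`. -/
theorem criticalRegion_optimality
    {m n nc : ℕ} (H : Matrix (Fin m) (Fin m) ℝ) (hH : H.PosDef)
    (G : Matrix (Fin nc) (Fin m) ℝ) (b : Fin nc → ℝ) (S : Matrix (Fin nc) (Fin n) ℝ)
    (A : Finset (Fin nc)) (hA : FullRowRank G A) (θ : Fin n → ℝ)
    (hprimal : G.mulVec (zOf H G b S A θ) ≤ b + S.mulVec θ)
    (hdual : ∀ i : A, 0 ≤ lamOf H G b S A θ i) :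
    H.mulVec (zOf H G b S A θ) + Gᵀ.mulVec (lamExt H G b S A θ) = 0 ∧
    G.mulVec (zOf H G b S A θ) ≤ b + S.mulVec θ ∧
    (∀ k, 0 ≤ lamExt H G b S A θ k) ∧
    (∀ k, lamExt H G b S A θ k *
        (G k ⬝ᵥ zOf H G b S A θ - b k - S.mulVec θ k) = 0) ∧
    (∀ z : Fin m → ℝ, G.mulVec z ≤ b + S.mulVec θ →
      (1 / 2) * (zOf H G b S A θ ⬝ᵥ H.mulVec (zOf H G b S A θ)) ≤
          (1 / 2) * (z ⬝ᵥ H.mulVec z) ∧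
        ((1 / 2) * (z ⬝ᵥ H.mulVec z) =
            (1 / 2) * (zOf H G b S A θ ⬝ᵥ H.mulVec (zOf H G b S A θ)) →
          z = zOf H G b S A θ)) := by
  have hkkt := isKKTPoint_zOf_lamExt hH hA hprimal hdual
  refine ⟨hkkt.stationary, hprimal, hkkt.dual_feasible, fun k => ?_,
    fun z hz => ⟨?_, fun heq => ?_⟩⟩
  · rw [sub_sub]
    exact hkkt.complementary_slackness k
  · linarith [hkkt.dotProduct_mulVec_le hH.posSemidef hz]
  · exact hkkt.eq_of_dotProduct_mulVec_eq hH hz (by linarith)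

end MpQP
end
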